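/- Let d1, d2 ≥ 1 and define f(x,y,z) = x · ∏_{i=1}^{d1} (x − i y) · ∏_{j=1}^{d2} (x − j z) ∈ ℂ[x,y,z], a product of d = d1 + d2 + 1 distinct linear forms. Then the point (0:0:1) lies on exactly d1 + 1 of these lines and the point (0:1:0) lies on exactly d2 + 1 of these lines, and every other point of ℙ²(ℂ) lies on at most 2 of these lines. -/

import Mathlib

/-!
A point off the line `x = 0` lies on at most one of the lines `x = i y`, since `i` is then
determined as `x / y`, and likewise on at most one line `x = j z`: at most two lines in all.
On `x = 0` the lines `x = i y` meet only in `(0:0:1)` and the lines `x = j z` only in `(0:1:0)`,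
so every other point of `x = 0` lies on that line alone.
-/

open MvPolynomial
open scoped Classical

/-- The number of linear factors of `f = x ∏_{i=1}^{d1}(x - i y) ∏_{j=1}^{d2}(x - j z)`
vanishing at the vector `v`, i.e. the multiplicity of the corresponding projective point
with respect to this line arrangement. -/
noncomputable def arrMult (d1 d2 : ℕ) (v : Fin 3 → ℂ) : ℕ :=
  (if v 0 = 0 then 1 else 0)
    + ((Finset.range d1).filter (fun i => v 0 = ((i : ℂ) + 1) * v 1)).card
    + ((Finset.range d2).filter (fun j => v 0 = ((j : ℂ) + 1) * v 2)).card

open Finset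

-- The ascription `(i : ℂ)` in `arrMult` coerces `Finset.range d` to a `Finset ℂ` through the
-- classical `Finset` monad; this brings the count back to `ℕ`.
lemma card_filter_natCast_range {R : Type} [AddMonoidWithOne R] [CharZero R] (d : ℕ)
    (p : R → Prop) :
    #{x ∈ (do let i ← range d; pure (i : R)) | p x} =
      #((range d).filter fun i : ℕ => p i) := by
  rw [bind_pure_comp, fmap_def, filter_image, card_image_of_injective _ Nat.cast_injective]

noncomputable def pencilMult {R : Type*} [Semiring R] (d : ℕ) (a b : R) : ℕ :=
  #((range d).filter fun i : ℕ => a = (i + 1) * b)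

lemma pencilMult_zero_zero {R : Type*} [Semiring R] (d : ℕ) : pencilMult d (0 : R) 0 = d := by
  simp [pencilMult]

lemma pencilMult_zero_left {R : Type*} [Semiring R] [NoZeroDivisors R] [CharZero R] (d : ℕ)
    {b : R} (hb : b ≠ 0) : pencilMult d 0 b = 0 := by
  simp [pencilMult, eq_comm (a := (0 : R)), hb, Nat.cast_add_one_ne_zero]

lemma pencilMult_le_one {R : Type*} [Ring R] [IsDomain R] [CharZero R] (d : ℕ) {a : R}
    (ha : a ≠ 0) (b : R) : pencilMult d a b ≤ 1 := by
  refine card_le_one.mpr fun i hi j hj => ?_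
  simp only [mem_filter] at hi hj
  have hb : b ≠ 0 := by rintro rfl; simp_all
  exact_mod_cast add_right_cancel (mul_right_cancel₀ hb (hi.2.symm.trans hj.2))

lemma arrMult_eq (d1 d2 : ℕ) (v : Fin 3 → ℂ) :
    arrMult d1 d2 v = (if v 0 = 0 then 1 else 0) + pencilMult d1 (v 0) (v 1)
      + pencilMult d2 (v 0) (v 2) := by
  simp only [arrMult, pencilMult, card_filter_natCast_range]

lemma eq_smul_single_two {R : Type*} [MulZeroOneClass R] {v : Fin 3 → R} (h0 : v 0 = 0)
    (h1 : v 1 = 0) : v = v 2 • ![0, 0, 1] := by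
  ext k; fin_cases k <;> simp [h0, h1]

lemma eq_smul_single_one {R : Type*} [MulZeroOneClass R] {v : Fin 3 → R} (h0 : v 0 = 0)
    (h2 : v 2 = 0) : v = v 1 • ![0, 1, 0] := by
  ext k; fin_cases k <;> simp [h0, h2]

theorem stmt_7 (d1 d2 : ℕ) :
    arrMult d1 d2 ![0, 0, 1] = d1 + 1 ∧
    arrMult d1 d2 ![0, 1, 0] = d2 + 1 ∧
    ∀ v : Fin 3 → ℂ, v ≠ 0 →
      (∀ t : ℂ, v ≠ t • ![0, 0, 1]) → (∀ t : ℂ, v ≠ t • ![0, 1, 0]) →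
      arrMult d1 d2 v ≤ 2 := by
  refine ⟨?_, ?_, fun v _ hv₃ hv₂ => ?_⟩
  · simp [arrMult_eq, pencilMult_zero_zero, pencilMult_zero_left, add_comm]
  · simp [arrMult_eq, pencilMult_zero_zero, pencilMult_zero_left, add_comm]
  rw [arrMult_eq]
  by_cases h0 : v 0 = 0
  · have h1 : v 1 ≠ 0 := fun h1 => hv₃ _ (eq_smul_single_two h0 h1)
    have h2 : v 2 ≠ 0 := fun h2 => hv₂ _ (eq_smul_single_one h0 h2)
    simp [h0, pencilMult_zero_left, h1, h2]
  · have := pencilMult_le_one d1 h0 (v 1)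
    have := pencilMult_le_one d2 h0 (v 2)
    simp only [h0, if_false]
    omega
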